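/- arXiv:1708.06883 — 2 statements merged into one kernel-verified Lean document; each statement's English description precedes it below -/
import Mathlib

section
/- Let G be a finite simple graph on n vertices and let W(G) be the whiskered graph obtained by adding, for each vertex v of G, a new vertex v' and the edge {v,v'}. Then every maximal independent set of W(G) has cardinality exactly n. In particular, W(G) is unmixed (well-covered) and every minimal vertex cover of W(G) has cardinality n = |V(W(G))|/2, so W(G) is a very well-covered graph. -/
open SimpleGraph

def IndepSet {W : Type*} (G : SimpleGraph W) (S : Set W) : Prop :=
  ∀ u ∈ S, ∀ v ∈ S, ¬ G.Adj u v

def MaxIndepSet {W : Type*} (G : SimpleGraph W) (S : Set W) : Prop :=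
  IndepSet G S ∧ ∀ T : Set W, IndepSet G T → S ⊆ T → S = T

def VertexCover {W : Type*} (G : SimpleGraph W) (C : Set W) : Prop :=
  ∀ u v : W, G.Adj u v → u ∈ C ∨ v ∈ C

def MinVertexCover {W : Type*} (G : SimpleGraph W) (C : Set W) : Prop :=
  VertexCover G C ∧ ∀ D : Set W, VertexCover G D → D ⊆ C → D = C

/-- The whiskered graph W(G): to each vertex `v` (in the left copy) attach a
pendant vertex `v'` (in the right copy). -/
def whisker {W : Type*} (G : SimpleGraph W) : SimpleGraph (W ⊕ W) where
  Adj a b := match a, b with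
    | .inl u, .inl v => G.Adj u v
    | .inl u, .inr v => u = v
    | .inr u, .inl v => u = v
    | .inr _, .inr _ => False
  symm := ⟨by rintro (u|u) (v|v) hv <;> simp_all <;> exact hv.symm⟩
  loopless := ⟨by rintro (u|u) hu <;> simp_all⟩

/-! A maximal independent set of W(G) contains exactly one of `v`, `v'` for every vertex `v`:
not both, as they are adjacent, and at least one, since otherwise `v'`, whose only neighbour
is `v`, could be added. Complements of minimal vertex covers are maximal independent sets,
and W(G) has `2n` vertices. -/

theorem Set.ncard_eq_card_of_inl_mem_iff_inr_notMem {α : Type*} [Finite α] {S : Set (α ⊕ α)}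
    (hS : ∀ a, Sum.inl a ∈ S ↔ Sum.inr a ∉ S) : S.ncard = Nat.card α := by
  have hbij : Set.BijOn (Sum.elim id id) S Set.univ := by
    refine ⟨Set.mapsTo_univ _ _, ?_, fun a _ => ?_⟩
    · rintro (a | a) ha (b | b) hb (rfl : a = b) <;> simp_all
    · by_cases ha : Sum.inl a ∈ S
      · exact ⟨_, ha, rfl⟩
      · exact ⟨_, not_imp_comm.mp (hS a).mpr ha, rfl⟩
  rw [hbij.ncard_eq, Set.ncard_univ]

section

variable {V : Type*} {G : SimpleGraph V}

theorem vertexCover_iff_indepSet_compl {C : Set V} : VertexCover G C ↔ IndepSet G Cᶜ := by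
  simp only [VertexCover, IndepSet, Set.mem_compl_iff]
  grind

theorem MinVertexCover.maxIndepSet_compl {C : Set V} (hC : MinVertexCover G C) :
    MaxIndepSet G Cᶜ := by
  refine ⟨vertexCover_iff_indepSet_compl.mp hC.1, fun T hT hCT => ?_⟩
  have hTc : VertexCover G Tᶜ := vertexCover_iff_indepSet_compl.mpr (by rwa [compl_compl])
  rw [← hC.2 Tᶜ hTc (Set.compl_subset_comm.mp hCT), compl_compl]

theorem MaxIndepSet.exists_adj_of_notMem {S : Set V} (hS : MaxIndepSet G S) {v : V}
    (hv : v ∉ S) : ∃ u ∈ S, G.Adj v u := by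
  by_contra! hno
  have hind : IndepSet G (insert v S) := by
    rintro a (rfl | ha) b (rfl | hb) hab
    · exact G.loopless.irrefl _ hab
    · exact hno b hb hab
    · exact hno a ha hab.symm
    · exact hS.1 a ha b hb hab
  exact hv (hS.2 _ hind (Set.subset_insert v S) ▸ Set.mem_insert v S)

end

theorem MaxIndepSet.inl_mem_whisker_iff {V : Type*} {G : SimpleGraph V} {S : Set (V ⊕ V)}
    (hS : MaxIndepSet (whisker G) S) (v : V) : Sum.inl v ∈ S ↔ Sum.inr v ∉ S := by
  refine ⟨fun hl hr => hS.1 _ hl _ hr rfl, fun hr => ?_⟩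
  obtain ⟨u | u, hu, hadj⟩ := hS.exists_adj_of_notMem hr
  · cases (hadj : v = u)
    exact hu
  · exact hadj.elim

/-- every maximal independent set of the whiskered graph W(G) has
cardinality n = |V(G)|, and every minimal vertex cover of W(G) has cardinality
n = |V(W(G))|/2; so W(G) is unmixed and in fact very well-covered. -/
theorem stmt8 {W : Type*} [Fintype W] (G : SimpleGraph W) :
    (∀ S : Set (W ⊕ W), MaxIndepSet (whisker G) S → S.ncard = Fintype.card W) ∧
    (∀ C : Set (W ⊕ W), MinVertexCover (whisker G) C → C.ncard = Fintype.card W) := by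
  have hindep (S : Set (W ⊕ W)) (hS : MaxIndepSet (whisker G) S) :
      S.ncard = Fintype.card W := by
    rw [← Nat.card_eq_fintype_card]
    exact Set.ncard_eq_card_of_inl_mem_iff_inr_notMem hS.inl_mem_whisker_iff
  refine ⟨hindep, fun C hC => ?_⟩
  have hsplit := Set.ncard_add_ncard_compl C
  rw [hindep _ hC.maxIndepSet_compl, Nat.card_eq_fintype_card, Fintype.card_sum] at hsplit
  omega
end

section
/- Let G be a finite simple graph on vertex set {x_1,...,x_h, y_1,...,y_h} with Y = {y_1,...,y_h} a maximal independent set, X = {x_1,...,x_h} a minimal vertex cover, {x_i,y_i} ∈ E(G) for all i, satisfying: (1) for distinct i,j,k and z_i ∈ {x_i,y_i}, if {z_i,x_j} ∈ E(G) and {y_j,x_k} ∈ E(G) then {z_i,x_k} ∈ E(G); (2) if {x_i,y_j} ∈ E(G) then {x_i,x_j} ∉ E(G). Let e = {x_n, y_m} ∈ E(G), assume no vertex of G is adjacent to both x_n and y_m, and let G' be the graph on V(G) adding to E(G) all pairs of distinct vertices even-connected with respect to e. Then G' is a very well-covered graph: X is a minimal vertex cover of G', Y is a maximal independent set of G', {x_i,y_i}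 ∈ E(G') for all i, and G' satisfies conditions (1) and (2). -/
open SimpleGraph

/-- Vertex type for a labeled very well-covered graph on 2h vertices:
`Sum.inl i` is xᵢ and `Sum.inr i` is yᵢ. -/
abbrev Vtx (h : ℕ) := Fin h ⊕ Fin h

variable {h : ℕ}

def xv (i : Fin h) : Vtx h := Sum.inl i
def yv (i : Fin h) : Vtx h := Sum.inr i

/-- Condition (1) of the Crupi–Rinaldo–Terai characterization. -/
def Cond1 (G : SimpleGraph (Vtx h)) : Prop :=
  ∀ i j k : Fin h, i ≠ j → j ≠ k → i ≠ k →
    ∀ z ∈ ({xv i, yv i} : Set (Vtx h)),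
      G.Adj z (xv j) → G.Adj (yv j) (xv k) → G.Adj z (xv k)

/-- Condition (2) of the Crupi–Rinaldo–Terai characterization. -/
def Cond2 (G : SimpleGraph (Vtx h)) : Prop :=
  ∀ i j : Fin h, G.Adj (xv i) (yv j) → ¬ G.Adj (xv i) (xv j)

def Xset (h : ℕ) : Set (Vtx h) := Set.range (xv (h := h))
def Yset (h : ℕ) : Set (Vtx h) := Set.range (yv (h := h))

/-- The graph obtained from `G` by adding all pairs of distinct vertices
even-connected with respect to the single edge `{a, b}`. -/
def ecGraph {W : Type*} (G : SimpleGraph W) (a b : W) : SimpleGraph W where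
  Adj u v := u ≠ v ∧ (G.Adj u v ∨ (G.Adj u a ∧ G.Adj b v) ∨ (G.Adj u b ∧ G.Adj a v))
  symm := by
    constructor
    intro u v hv
    obtain ⟨hne, hor⟩ := hv
    refine ⟨hne.symm, ?_⟩
    rcases hor with h' | ⟨h1, h2⟩ | ⟨h1, h2⟩
    · exact Or.inl h'.symm
    · exact Or.inr (Or.inr ⟨h2.symm, h1.symm⟩)
    · exact Or.inr (Or.inl ⟨h2.symm, h1.symm⟩)
  loopless := by constructor; intro u hu; exact hu.1 rfl

/-!
An edge added to `G` joins a neighbour of `xₙ` to a neighbour of `yₘ`. Since `yₘ ∉ X` and `Y` is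
independent, `X` still covers and `Y` stays independent; minimality and maximality pass to the
larger graph. Condition (1), once freed of its distinctness assumptions by the edges `{xᵢ, yᵢ}`
(`XTransitive`), lets adjacency to `xⱼ` travel along an edge `{yⱼ, xₖ}`. Pushing the ends of a new
edge along such edges yields again a new edge, which gives (1) for `G'`; doing the same to a
violation of (2) in `G'` produces a common neighbour of `xₙ` and `yₘ`.
-/

section General

variable {W : Type*} {G H : SimpleGraph W}

lemma le_ecGraph (a b : W) : G ≤ ecGraph G a b := fun _ _ huv => ⟨huv.ne, Or.inl huv⟩

lemma VertexCover.ecGraph_of_notMem {C : Set W} (hC : VertexCover G C) {a b : W} (hb : b ∉ C) :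
    VertexCover (ecGraph G a b) C := by
  rintro u v ⟨-, huv | ⟨-, hbv⟩ | ⟨hub, -⟩⟩
  · exact hC u v huv
  · exact Or.inr ((hC b v hbv).resolve_left hb)
  · exact Or.inl ((hC u b hub).resolve_right hb)

lemma IndepSet.ecGraph_of_mem {S : Set W} (hS : IndepSet G S) {a b : W} (hb : b ∈ S) :
    IndepSet (ecGraph G a b) S := by
  rintro u hu v hv ⟨-, huv | ⟨-, hbv⟩ | ⟨hub, -⟩⟩
  · exact hS u hu v hv huv
  · exact hS b hb v hv hbv
  · exact hS u hu b hb hub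

lemma MinVertexCover.of_le {C : Set W} (hC : MinVertexCover G C) (hle : G ≤ H)
    (hH : VertexCover H C) : MinVertexCover H C :=
  ⟨hH, fun D hD hDC => hC.2 D (fun u v huv => hD u v (hle huv)) hDC⟩

lemma MaxIndepSet.of_le {S : Set W} (hS : MaxIndepSet G S) (hle : G ≤ H)
    (hH : IndepSet H S) : MaxIndepSet H S :=
  ⟨hH, fun T hT hST => hS.2 T (fun u hu v hv huv => hT u hu v hv (hle huv)) hST⟩

end General

section Labeled

variable {G : SimpleGraph (Vtx h)}

lemma IndepSet.not_adj_yv_yv (hY : IndepSet G (Yset h)) (i j : Fin h) : ¬ G.Adj (yv i) (yv j) :=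
  hY (yv i) ⟨i, rfl⟩ (yv j) ⟨j, rfl⟩

def XTransitive (G : SimpleGraph (Vtx h)) : Prop :=
  ∀ (z : Vtx h) (j k : Fin h), z ≠ xv k → G.Adj z (xv j) → G.Adj (yv j) (xv k) → G.Adj z (xv k)

lemma cond1_iff_xTransitive (hpair : ∀ i : Fin h, G.Adj (xv i) (yv i)) :
    Cond1 G ↔ XTransitive G := by
  constructor
  · intro h1 z j k hzk hzj hjk
    obtain ⟨i, hz⟩ : ∃ i, z ∈ ({xv i, yv i} : Set (Vtx h)) := by
      rcases z with i | i
      exacts [⟨i, .inl rfl⟩, ⟨i, .inr rfl⟩]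
    by_cases hjk' : j = k
    · exact hjk' ▸ hzj
    by_cases hij : i = j
    · subst hij
      rcases hz with rfl | rfl
      exacts [(hzj.ne rfl).elim, hjk]
    by_cases hik : i = k
    · subst hik
      rcases hz with rfl | rfl
      exacts [(hzk rfl).elim, (hpair i).symm]
    exact h1 i j k hij hjk' hik z hz hzj hjk
  · rintro hT i j k - - hik z hz hzj hjk
    refine hT z j k ?_ hzj hjk
    rcases hz with rfl | rfl
    · exact fun hx => hik (Sum.inl_injective hx)
    · exact Sum.inr_ne_inl

lemma XTransitive.adj_of_adj_yv (hT : XTransitive G) (h2 : Cond2 G) {z : Vtx h} {j b : Fin h}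
    (hz : G.Adj z (xv j)) (hb : G.Adj (xv b) (yv j)) : G.Adj z (xv b) := by
  by_cases hzb : z = xv b
  · subst hzb
    exact (h2 b j hb hz).elim
  · exact hT z j b hzb hz hb.symm

variable {n m : Fin h}

lemma XTransitive.xTransitive_ecGraph (hT : XTransitive G) (hY : IndepSet G (Yset h))
    (h2 : Cond2 G) : XTransitive (ecGraph G (xv n) (yv m)) := by
  rintro z j k hzk ⟨-, hzj⟩ ⟨-, hjk | ⟨hjn, hmk⟩ | ⟨hjm, -⟩⟩
  · refine ⟨hzk, ?_⟩
    rcases hzj with hzj | ⟨hzn, hmj⟩ | ⟨hzm, hnj⟩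
    · exact .inl (hT z j k hzk hzj hjk)
    · exact .inr (.inl ⟨hzn, hT _ j k Sum.inr_ne_inl hmj hjk⟩)
    · exact .inr (.inr ⟨hzm, hT.adj_of_adj_yv h2 hnj hjk.symm⟩)
  · refine ⟨hzk, .inr (.inl ⟨?_, hmk⟩)⟩
    rcases hzj with hzj | ⟨hzn, -⟩ | ⟨-, hnj⟩
    · exact hT.adj_of_adj_yv h2 hzj hjn.symm
    · exact hzn
    · exact (h2 n j hjn.symm hnj).elim
  · exact (hY.not_adj_yv_yv j m hjm).elim

lemma XTransitive.cond2_ecGraph (hT : XTransitive G) (hY : IndepSet G (Yset h)) (h2 : Cond2 G)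
    (hsq : ∀ u : Vtx h, ¬ (G.Adj u (xv n) ∧ G.Adj u (yv m))) :
    Cond2 (ecGraph G (xv n) (yv m)) := by
  rintro i j ⟨-, hij | ⟨-, hmj⟩ | ⟨him, hnj⟩⟩ ⟨-, hxx⟩
  · rcases hxx with hxx | ⟨hin, hmj⟩ | ⟨him, hnj⟩
    · exact h2 i j hij hxx
    · exact hsq (xv i) ⟨hin, (hT (yv m) j i Sum.inr_ne_inl hmj hij.symm).symm⟩
    · exact hsq (xv i) ⟨(hT.adj_of_adj_yv h2 hnj hij).symm, him⟩
  · exact hY.not_adj_yv_yv m j hmj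
  · rcases hxx with hxx | ⟨hin, -⟩ | ⟨-, hnj'⟩
    · exact hsq (xv i) ⟨hT.adj_of_adj_yv h2 hxx hnj, him⟩
    · exact hsq (xv i) ⟨hin, him⟩
    · exact h2 n j hnj hnj'

end Labeled

theorem stmt14_general (h : ℕ) (G : SimpleGraph (Vtx h))
    (hY : MaxIndepSet G (Yset h)) (hX : MinVertexCover G (Xset h))
    (hpair : ∀ i : Fin h, G.Adj (xv i) (yv i))
    (h1 : Cond1 G) (h2 : Cond2 G)
    (n m : Fin h)
    (hsq : ∀ u : Vtx h, ¬ (G.Adj u (xv n) ∧ G.Adj u (yv m)))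
    (G' : SimpleGraph (Vtx h)) (hG' : G' = ecGraph G (xv n) (yv m)) :
    MinVertexCover G' (Xset h) ∧ MaxIndepSet G' (Yset h) ∧
    (∀ i : Fin h, G'.Adj (xv i) (yv i)) ∧ Cond1 G' ∧ Cond2 G' := by
  subst hG'
  have hle : G ≤ ecGraph G (xv n) (yv m) := le_ecGraph _ _
  have hpair' : ∀ i, (ecGraph G (xv n) (yv m)).Adj (xv i) (yv i) := fun i => hle (hpair i)
  have hT : XTransitive G := (cond1_iff_xTransitive hpair).mp h1
  have hym : yv m ∉ Xset h := by
    rintro ⟨i, hi⟩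
    exact Sum.inl_ne_inr hi
  exact ⟨hX.of_le hle (hX.1.ecGraph_of_notMem hym),
    hY.of_le hle (hY.1.ecGraph_of_mem ⟨m, rfl⟩), hpair',
    (cond1_iff_xTransitive hpair').mpr (hT.xTransitive_ecGraph hY.1 h2),
    hT.cond2_ecGraph hY.1 h2 hsq⟩

/-- Theorem 3.4, case s = 1: if no vertex of G is adjacent to
both xₙ and yₘ, then the even-connection graph G' of the edge {xₙ, yₘ} is
again a (labeled) very well-covered graph. -/
theorem stmt14 (h : ℕ) (G : SimpleGraph (Vtx h))
    (hY : MaxIndepSet G (Yset h)) (hX : MinVertexCover G (Xset h))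
    (hpair : ∀ i : Fin h, G.Adj (xv i) (yv i))
    (h1 : Cond1 G) (h2 : Cond2 G)
    (n m : Fin h) (he : G.Adj (xv n) (yv m))
    (hsq : ∀ u : Vtx h, ¬ (G.Adj u (xv n) ∧ G.Adj u (yv m)))
    (G' : SimpleGraph (Vtx h)) (hG' : G' = ecGraph G (xv n) (yv m)) :
    MinVertexCover G' (Xset h) ∧ MaxIndepSet G' (Yset h) ∧
    (∀ i : Fin h, G'.Adj (xv i) (yv i)) ∧ Cond1 G' ∧ Cond2 G' :=
  stmt14_general h G hY hX hpair h1 h2 n m hsq G' hG'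
end
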